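/- arXiv:2003.06065 — 3 statements merged into one kernel-verified Lean document; each statement's English description precedes it below -/
import Mathlib

section
/- Let λ, μ > 0 with λ ≠ μ, H > 0, and for 0 ≤ D ≤ H define P_{H,0}(D) = λ(e^{(μ−λ)D} − 1)/(μ·e^{(μ−λ)H} − λ). Then μ·∫_0^H e^{−μx} P_{H,0}(x) dx + e^{−μH} = (μ−λ)/(μ·e^{(μ−λ)H} − λ). -/
/-!
Since `e^{-mx} (e^{(m-l)x} - 1) = e^{-lx} - e^{-mx}`, the integrand is a difference of two
exponentials and integrates in closed form; the boundary terms then cancel against `e^{-mH}`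
because `e^{-lH} = e^{-mH} e^{(m-l)H}`.
-/

open Real

theorem integral_exp_const_mul {c : ℝ} (hc : c ≠ 0) (a b : ℝ) :
    ∫ x in a..b, exp (c * x) = (exp (c * b) - exp (c * a)) / c := by
  rw [intervalIntegral.integral_comp_mul_left (fun x => exp x) hc, integral_exp, smul_eq_mul,
    inv_mul_eq_div]

theorem integral_exp_neg_mul_mul_exp_sub_one {l m : ℝ} (hl : l ≠ 0) (hm : m ≠ 0) (H : ℝ) :
    ∫ x in (0:ℝ)..H, exp (-m * x) * (exp ((m - l) * x) - 1)
      = (1 - exp (-l * H)) / l - (1 - exp (-m * H)) / m := by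
  have hsplit : ∀ x : ℝ, exp (-m * x) * (exp ((m - l) * x) - 1) = exp (-l * x) - exp (-m * x) := by
    intro x
    rw [mul_sub, mul_one, ← exp_add]
    ring_nf
  have hint (c : ℝ) : IntervalIntegrable (fun x => exp (c * x)) MeasureTheory.volume 0 H :=
    (continuous_exp.comp (continuous_const_mul c)).intervalIntegrable _ _
  simp_rw [hsplit]
  rw [intervalIntegral.integral_sub (hint _) (hint _),
    integral_exp_const_mul (neg_ne_zero.mpr hl), integral_exp_const_mul (neg_ne_zero.mpr hm)]
  simp only [mul_zero, exp_zero]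
  field_simp
  ring

theorem mul_exp_sub_mul_sub_ne_zero {l m H : ℝ} (hm : 0 < m) (hne : l ≠ m) (hH : 0 < H) :
    m * exp ((m - l) * H) - l ≠ 0 := by
  rcases hne.lt_or_gt with h | h
  · have : 1 < exp ((m - l) * H) := one_lt_exp_iff.mpr (by nlinarith)
    nlinarith
  · have : exp ((m - l) * H) < 1 := exp_lt_one_iff.mpr (by nlinarith)
    nlinarith

theorem stmt4 (l m H : ℝ) (hl : 0 < l) (hm : 0 < m) (hne : l ≠ m) (hH : 0 < H) :
    m * (∫ x in (0:ℝ)..H,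
        Real.exp (-m * x) * (l * (Real.exp ((m - l) * x) - 1) / (m * Real.exp ((m - l) * H) - l)))
      + Real.exp (-m * H)
      = (m - l) / (m * Real.exp ((m - l) * H) - l) := by
  set c := m * exp ((m - l) * H) - l with hc_def
  have hc : c ≠ 0 := mul_exp_sub_mul_sub_ne_zero hm hne hH
  have hfactor : ∀ x : ℝ, exp (-m * x) * (l * (exp ((m - l) * x) - 1) / c)
      = l / c * (exp (-m * x) * (exp ((m - l) * x) - 1)) := fun x => by ring
  have hexp_neg_mul : exp (-l * H) = exp (-m * H) * exp ((m - l) * H) := by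
    rw [← exp_add]; ring_nf
  simp_rw [hfactor]
  rw [intervalIntegral.integral_const_mul,
    integral_exp_neg_mul_mul_exp_sub_one hl.ne' hm.ne',
    hexp_neg_mul]
  field_simp
  rw [hc_def]
  ring_nf
end

section
/- For fixed μ > 0 and H > 0, the limit as λ → μ of E(C_{0,0})(λ) = 2λ{λ − μe^{2H(μ−λ)} + (μ−λ)e^{H(μ−λ)}[1 + H(λ+μ)]}/((λ−μ)(λ − μe^{H(μ−λ)})²) equals μH²(3 + 2μH)/(3(1 + μH)²). -/
/-!
With `d = l - m` and `x = H (m - l)`, expanding `exp x` and `exp (2x)` to third order with a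
remainder `x³ ρ(x)`, where `ρ` is continuous and `ρ 0 = 0`, shows that both numerator and
denominator are `d³` times expressions that are continuous in `l`. Cancelling `d³` leaves a
function continuous at `l = m` whose value there is the claimed limit.
-/

open Real Filter Topology Finset

/-- At `x = 0` the division by `0 ^ n` makes this `0` (for `n = 0` the numerator vanishes), which
is also its limit there. -/
noncomputable def expRemainder (n : ℕ) (x : ℝ) : ℝ :=
  (exp x - ∑ k ∈ range (n + 1), x ^ k / k.factorial) / x ^ n

theorem abs_expRemainder_le (n : ℕ) {x : ℝ} (hx : |x| ≤ 1) :
    |expRemainder n x| ≤ |x| * ((n + 1).succ / ((n + 1).factorial * (n + 1))) := by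
  rw [expRemainder, abs_div, abs_pow]
  refine div_le_of_le_mul₀ (by positivity) (by positivity) ?_
  calc _ ≤ |x| ^ (n + 1) * ((n + 1).succ / ((n + 1).factorial * (n + 1))) :=
        mod_cast exp_bound hx n.succ_pos
    _ = _ := by ring

theorem expRemainder_zero (n : ℕ) : expRemainder n 0 = 0 :=
  abs_nonpos_iff.mp <| by simpa using abs_expRemainder_le n (x := 0) (by simp)

theorem exp_eq_sum_add_expRemainder (n : ℕ) (x : ℝ) :
    exp x = ∑ k ∈ range (n + 1), x ^ k / k.factorial + x ^ n * expRemainder n x := by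
  rcases eq_or_ne x 0 with rfl | hx
  · simp [sum_range_succ', expRemainder_zero]
  · rw [expRemainder, mul_div_cancel₀ _ (pow_ne_zero n hx)]
    ring

theorem continuousAt_expRemainder_zero (n : ℕ) : ContinuousAt (expRemainder n) 0 := by
  set C : ℝ := (n + 1).succ / ((n + 1).factorial * (n + 1))
  rw [ContinuousAt, expRemainder_zero]
  refine squeeze_zero_norm' (a := fun x => |x| * C) ?_ ?_
  · filter_upwards [eventually_abs_sub_lt (0 : ℝ) one_pos] with x hx
    exact abs_expRemainder_le n (by simpa using hx.le)
  · have : Continuous fun x : ℝ => |x| * C := by fun_prop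
    simpa using this.tendsto 0

@[fun_prop]
theorem continuous_expRemainder (n : ℕ) : Continuous (expRemainder n) := by
  refine continuous_iff_continuousAt.mpr fun x => ?_
  rcases eq_or_ne x 0 with rfl | hx
  · exact continuousAt_expRemainder_zero n
  · exact ContinuousAt.div (by fun_prop) (by fun_prop) (pow_ne_zero n hx)

theorem exp_eq_cubic_add (x : ℝ) :
    exp x = 1 + x + x ^ 2 / 2 + x ^ 3 / 6 + x ^ 3 * expRemainder 3 x := by
  rw [exp_eq_sum_add_expRemainder 3]
  norm_num [sum_range_succ, Nat.factorial]

noncomputable def meanCycleLength (m H l : ℝ) : ℝ :=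
  2 * l * (l - m * exp (2 * H * (m - l)) + (m - l) * exp (H * (m - l)) * (1 + H * (l + m))) /
    ((l - m) * (l - m * exp (H * (m - l))) ^ 2)

/-- `meanCycleLength` with `exp` replaced by `exp_eq_cubic_add` and the common factor `(l - m) ^ 3`
cancelled. -/
noncomputable def meanCycleLengthRegular (m H l : ℝ) : ℝ :=
  2 * l * (H ^ 2 / 2 + m * H ^ 3 / 3 + 8 * m * H ^ 3 * expRemainder 3 (2 * H * (m - l)) +
      (l - m) * (-(H ^ 3) / 2 + (1 / 6 + expRemainder 3 (H * (m - l))) * (1 + 2 * m * H) * H ^ 3) +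
      (l - m) ^ 2 * (1 / 6 + expRemainder 3 (H * (m - l))) * H ^ 4) /
    (1 + m * H * (1 - H * (l - m) / 2 +
      H ^ 2 * (l - m) ^ 2 * (1 / 6 + expRemainder 3 (H * (m - l))))) ^ 2

theorem meanCycleLength_eq_regular {m H l : ℝ} (hl : l ≠ m) :
    meanCycleLength m H l = meanCycleLengthRegular m H l := by
  have hd : (l - m) ^ 3 ≠ 0 := pow_ne_zero 3 (sub_ne_zero.mpr hl)
  have cancel : ∀ {p q N D : ℝ}, p = (l - m) ^ 3 * N → q = (l - m) ^ 3 * D → p / q = N / D :=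
    fun hp hq => by rw [hp, hq, mul_div_mul_left _ _ hd]
  rw [meanCycleLength, meanCycleLengthRegular, exp_eq_cubic_add (2 * H * (m - l)),
    exp_eq_cubic_add (H * (m - l))]
  exact cancel (by ring) (by ring)

theorem continuousAt_meanCycleLengthRegular {m H : ℝ} (h : 1 + m * H ≠ 0) :
    ContinuousAt (meanCycleLengthRegular m H) m := by
  refine ContinuousAt.div (by fun_prop) (by fun_prop) ?_
  simpa [expRemainder_zero] using h

theorem meanCycleLengthRegular_self (m H : ℝ) :
    meanCycleLengthRegular m H m = m * H ^ 2 * (3 + 2 * m * H) / (3 * (1 + m * H) ^ 2) := by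
  simp only [meanCycleLengthRegular, sub_self, mul_zero, expRemainder_zero]
  rw [← div_div]
  congr 1 <;> ring

theorem stmt10 (m H : ℝ) (hm : 0 < m) (hH : 0 < H) :
    Tendsto (fun l : ℝ =>
        2 * l * (l - m * Real.exp (2 * H * (m - l)) +
            (m - l) * Real.exp (H * (m - l)) * (1 + H * (l + m))) /
          ((l - m) * (l - m * Real.exp (H * (m - l))) ^ 2))
      (𝓝[≠] m) (𝓝 (m * H ^ 2 * (3 + 2 * m * H) / (3 * (1 + m * H) ^ 2))) := by
  change Tendsto (meanCycleLength m H) _ _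
  have hcont := continuousAt_meanCycleLengthRegular (m := m) (H := H) (by positivity)
  rw [ContinuousAt, meanCycleLengthRegular_self] at hcont
  refine (hcont.mono_left nhdsWithin_le_nhds).congr' ?_
  filter_upwards [self_mem_nhdsWithin] with l hl
  exact (meanCycleLength_eq_regular hl).symm
end

section
/- Let L₁, L₁* ≥ 0, α ∈ (0,1), and 0 < P0H, PH0 < 1. Define ϑ = 1 − P0H − PH0, and for j ≥ 0 set P00^{(j)} = (PH0 + P0H ϑ^j)/(P0H+PH0), P0H^{(j)} = (P0H − P0H ϑ^j)/(P0H+PH0), PH0^{(j)} = (PH0 − PH0 ϑ^j)/(P0H+PH0), PHH^{(j)} = (P0H + PH0 ϑ^j)/(P0H+PH0). Then the sum S = L₁[α + α(1−α)(1−P0H) + (2−P0H)(1−α)²] + L₁*[α(1−α)P0H + P0H(1−α)²] + L₁ P00^{(2)} Σ_{j≥0}(1−α)^{j+2}P00^{(j)} + L₁ P0H^{(2)} Σ_{j≥1}(1−α)^{j+2}PH0^{(j)} + L₁* P0H^{(2)} Σ_{j≥0}(1−α)^{j+2}PHH^{(j)} + L₁* P00^{(2)} Σ_{j≥1}(1−α)^{j+2}P0H^{(j)}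 equals the closed form L₁[1 − α(1−α) + (1−α)(1−P0H) + (1−α)²(1 − P0H(2−P0H−PH0))/(α + (1−α)(P0H+PH0)) + ((1−α)³/α)·PH0/(α + (1−α)(P0H+PH0))] + L₁* P0H (1−α)[α + (1−α)(2 + (1−P0H−PH0)α)/(α + (1−α)(P0H+PH0)) + ((1−α)²/α)/(α + (1−α)(P0H+PH0))]. -/
/-!
The `j`-th power of the two-state transition matrix splits spectrally as `Π + ϑ ^ j (I - Π)`, with
`Π` the stationary projection and `ϑ = 1 - P0H - PH0` the second eigenvalue. Each series is
therefore the sum of two geometric series, of ratios `1 - α` and `(1 - α) ϑ`, and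
`1 - (1 - α) ϑ = α + (1 - α) (P0H + PH0)` is the common denominator of the closed form.
-/

/-- Entries of the `j`-th power of the phase-transition matrix. -/
noncomputable def P00j (P0H PH0 : ℝ) (j : ℕ) : ℝ :=
  (PH0 + P0H * (1 - P0H - PH0) ^ j) / (P0H + PH0)

noncomputable def P0Hj (P0H PH0 : ℝ) (j : ℕ) : ℝ :=
  (P0H - P0H * (1 - P0H - PH0) ^ j) / (P0H + PH0)

noncomputable def PH0j (P0H PH0 : ℝ) (j : ℕ) : ℝ :=
  (PH0 - PH0 * (1 - P0H - PH0) ^ j) / (P0H + PH0)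

noncomputable def PHHj (P0H PH0 : ℝ) (j : ℕ) : ℝ :=
  (P0H + PH0 * (1 - P0H - PH0) ^ j) / (P0H + PH0)

section GeometricSeries

variable {K : Type*} [NormedField K] {r t a b : K}

theorem tsum_pow_mul_affine_pow (hr : ‖r‖ < 1) (hrt : ‖r * t‖ < 1)
    (k : ℕ) (f : ℕ → K) (hf : ∀ j, f j = a + b * t ^ j) :
    ∑' j : ℕ, r ^ (j + k) * f j = r ^ k * (a / (1 - r) + b / (1 - r * t)) := by
  have hsum := (((hasSum_geometric_of_norm_lt_one hr).mul_left a).add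
    ((hasSum_geometric_of_norm_lt_one hrt).mul_left b)).mul_left (r ^ k)
  rw [div_eq_mul_inv, div_eq_mul_inv, ← hsum.tsum_eq]
  exact tsum_congr fun j => by rw [hf, mul_pow]; ring

theorem tsum_pow_mul_affine_pow_succ (hr : ‖r‖ < 1) (hrt : ‖r * t‖ < 1)
    (k : ℕ) (f : ℕ → K) (hf : ∀ j, f j = a + b * t ^ j) :
    ∑' j : ℕ, r ^ (j + 1 + k) * f (j + 1)
      = r ^ (k + 1) * (a / (1 - r) + b * t / (1 - r * t)) := by
  have hf' : ∀ j, f (j + 1) = a + b * t * t ^ j := fun j => by rw [hf, pow_succ']; ring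
  rw [← tsum_pow_mul_affine_pow hr hrt (k + 1) _ hf']
  exact tsum_congr fun j => by ring

end GeometricSeries

section SpectralDecomposition

variable (P0H PH0 : ℝ) (j : ℕ)

theorem P00j_eq_add_mul_pow : P00j P0H PH0 j
    = PH0 / (P0H + PH0) + P0H / (P0H + PH0) * (1 - P0H - PH0) ^ j := by
  unfold P00j; ring

theorem P0Hj_eq_add_mul_pow : P0Hj P0H PH0 j
    = P0H / (P0H + PH0) + -P0H / (P0H + PH0) * (1 - P0H - PH0) ^ j := by
  unfold P0Hj; ring

theorem PH0j_eq_add_mul_pow : PH0j P0H PH0 j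
    = PH0 / (P0H + PH0) + -PH0 / (P0H + PH0) * (1 - P0H - PH0) ^ j := by
  unfold PH0j; ring

theorem PHHj_eq_add_mul_pow : PHHj P0H PH0 j
    = P0H / (P0H + PH0) + PH0 / (P0H + PH0) * (1 - P0H - PH0) ^ j := by
  unfold PHHj; ring

end SpectralDecomposition

theorem stmt19_general (L1 L1s α P0H PH0 : ℝ)
    (hα : 0 < α) (hα' : α < 1)
    (h0H : 0 < P0H) (h0H' : P0H < 1) (hH0 : 0 < PH0) (hH0' : PH0 < 1) :
    L1 * (α + α * (1 - α) * (1 - P0H) + (2 - P0H) * (1 - α) ^ 2)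
      + L1s * (α * (1 - α) * P0H + P0H * (1 - α) ^ 2)
      + L1 * P00j P0H PH0 2 * (∑' j : ℕ, (1 - α) ^ (j + 2) * P00j P0H PH0 j)
      + L1 * P0Hj P0H PH0 2 * (∑' j : ℕ, (1 - α) ^ ((j + 1) + 2) * PH0j P0H PH0 (j + 1))
      + L1s * P0Hj P0H PH0 2 * (∑' j : ℕ, (1 - α) ^ (j + 2) * PHHj P0H PH0 j)
      + L1s * P00j P0H PH0 2 * (∑' j : ℕ, (1 - α) ^ ((j + 1) + 2) * P0Hj P0H PH0 (j + 1))
    = L1 * (1 - α * (1 - α) + (1 - α) * (1 - P0H)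
          + (1 - α) ^ 2 * (1 - P0H * (2 - P0H - PH0)) / (α + (1 - α) * (P0H + PH0))
          + ((1 - α) ^ 3 / α) * (PH0 / (α + (1 - α) * (P0H + PH0))))
      + L1s * P0H * (1 - α) *
          (α + (1 - α) * (2 + (1 - P0H - PH0) * α) / (α + (1 - α) * (P0H + PH0))
            + ((1 - α) ^ 2 / α) * (1 / (α + (1 - α) * (P0H + PH0)))) := by
  have hr : ‖1 - α‖ < 1 := by rw [Real.norm_eq_abs, abs_lt]; constructor <;> linarith
  have ht : ‖1 - P0H - PH0‖ < 1 := by rw [Real.norm_eq_abs, abs_lt]; constructor <;> linarith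
  have hrt : ‖(1 - α) * (1 - P0H - PH0)‖ < 1 := by
    rw [norm_mul]
    exact mul_lt_one_of_nonneg_of_lt_one_left (norm_nonneg _) hr ht.le
  rw [tsum_pow_mul_affine_pow hr hrt 2 _ (P00j_eq_add_mul_pow P0H PH0),
    tsum_pow_mul_affine_pow_succ hr hrt 2 _ (PH0j_eq_add_mul_pow P0H PH0),
    tsum_pow_mul_affine_pow hr hrt 2 _ (PHHj_eq_add_mul_pow P0H PH0),
    tsum_pow_mul_affine_pow_succ hr hrt 2 _ (P0Hj_eq_add_mul_pow P0H PH0),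
    sub_sub_cancel, show 1 - (1 - α) * (1 - P0H - PH0) = α + (1 - α) * (P0H + PH0) by ring]
  have hden : 0 < α + (1 - α) * (P0H + PH0) := by nlinarith
  have hrates : P0H + PH0 ≠ 0 := by positivity
  unfold P00j P0Hj
  field_simp
  ring

theorem stmt19 (L1 L1s α P0H PH0 : ℝ)
    (hL1 : 0 ≤ L1) (hL1s : 0 ≤ L1s) (hα : 0 < α) (hα' : α < 1)
    (h0H : 0 < P0H) (h0H' : P0H < 1) (hH0 : 0 < PH0) (hH0' : PH0 < 1) :
    L1 * (α + α * (1 - α) * (1 - P0H) + (2 - P0H) * (1 - α) ^ 2)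
      + L1s * (α * (1 - α) * P0H + P0H * (1 - α) ^ 2)
      + L1 * P00j P0H PH0 2 * (∑' j : ℕ, (1 - α) ^ (j + 2) * P00j P0H PH0 j)
      + L1 * P0Hj P0H PH0 2 * (∑' j : ℕ, (1 - α) ^ ((j + 1) + 2) * PH0j P0H PH0 (j + 1))
      + L1s * P0Hj P0H PH0 2 * (∑' j : ℕ, (1 - α) ^ (j + 2) * PHHj P0H PH0 j)
      + L1s * P00j P0H PH0 2 * (∑' j : ℕ, (1 - α) ^ ((j + 1) + 2) * P0Hj P0H PH0 (j + 1))
    = L1 * (1 - α * (1 - α) + (1 - α) * (1 - P0H)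
          + (1 - α) ^ 2 * (1 - P0H * (2 - P0H - PH0)) / (α + (1 - α) * (P0H + PH0))
          + ((1 - α) ^ 3 / α) * (PH0 / (α + (1 - α) * (P0H + PH0))))
      + L1s * P0H * (1 - α) *
          (α + (1 - α) * (2 + (1 - P0H - PH0) * α) / (α + (1 - α) * (P0H + PH0))
            + ((1 - α) ^ 2 / α) * (1 / (α + (1 - α) * (P0H + PH0)))) :=
  stmt19_general L1 L1s α P0H PH0 hα hα' h0H h0H' hH0 hH0'
end
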